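/- arXiv:0901.4520 — 4 statements merged into one kernel-verified Lean document; each statement's English description precedes it below -/
import Mathlib

section
/- Let q > 0, r = sqrt(q^2-q+1), p = 1/(1+q^3), and α, β real with α - β = (q+1)/r. Set z0 := β + (2q-1)/r and g0 := (z0 + α + β)/3. Then G(g0) = 0, G'(g0) = 0, and G''(g0) = 0, where G(g) = g^3 - (z0+α+β) g^2 + (z0(α+β) + αβ + 1) g - (αβ z0 + (1-p)α + pβ). -/
/-! With `a = (q+1)/r`, `b = (2q-1)/r` and `c = q/r` we have `α = β + a`, `z0 = β + b` and
`g0 = β + c`. The identities `a + b = 3c`, `ab + 1 = 3c²` and `(1 - p)a = c³` (the last because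
`1 + q³ = (q+1) r²`) say precisely that `G g = (g - g0)³`, and a cube vanishes to second order at
its root. -/

section SubConstPow

variable {𝕜 : Type*} [NontriviallyNormedField 𝕜]

theorem deriv_sub_const_pow (c : 𝕜) (n : ℕ) :
    deriv (fun x => (x - c) ^ n) = fun x => n * (x - c) ^ (n - 1) :=
  funext fun x => by simp

theorem sub_const_pow_vanishes_to_second_order (c : 𝕜) {n : ℕ} (hn : 2 < n) :
    let f := fun x => (x - c) ^ n
    f c = 0 ∧ deriv f c = 0 ∧ deriv (deriv f) c = 0 := by
  simp only [deriv_sub_const_pow, deriv_const_mul_field', sub_self]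
  exact ⟨zero_pow (by omega), by simp [zero_pow (by omega : n - 1 ≠ 0)],
    by simp [zero_pow (by omega : n - 1 - 1 ≠ 0)]⟩

end SubConstPow

theorem cubic_eq_cube_sub {R : Type*} [CommRing R] {a b c p : R} (hsum : a + b = 3 * c)
    (hprod : a * b + 1 = 3 * c ^ 2) (hcube : (1 - p) * a = c ^ 3) (β x : R) :
    x ^ 3 - ((β + b) + (β + a) + β) * x ^ 2 + ((β + b) * ((β + a) + β) + (β + a) * β + 1) * x
      - ((β + a) * β * (β + b) + (1 - p) * (β + a) + p * β) = (x - (β + c)) ^ 3 := by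
  linear_combination (-x ^ 2 + 2 * β * x - β ^ 2) * hsum + (x - β) * hprod - hcube

section Parameters

variable {K : Type*} [Field K] {q r : K}

theorem div_add_div_eq_three_mul_div (hr : r ≠ 0) : (q + 1) / r + (2 * q - 1) / r = 3 * (q / r) := by
  field_simp; ring

theorem div_mul_div_add_one_eq_three_mul_div_sq (hr2 : r ^ 2 = q ^ 2 - q + 1) (hr : r ≠ 0) :
    (q + 1) / r * ((2 * q - 1) / r) + 1 = 3 * (q / r) ^ 2 := by
  field_simp; linear_combination hr2

theorem one_sub_inv_mul_div_eq_div_pow_three (hr2 : r ^ 2 = q ^ 2 - q + 1) (hr : r ≠ 0)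
    (hq : 1 + q ^ 3 ≠ 0) : (1 - 1 / (1 + q ^ 3)) * ((q + 1) / r) = (q / r) ^ 3 := by
  field_simp; linear_combination (q ^ 3 * (q + 1)) * hr2

end Parameters

theorem triple_root_of_G (q : ℝ) (hq : 0 < q)
    (r : ℝ) (hr : r = Real.sqrt (q^2 - q + 1))
    (p : ℝ) (hp : p = 1 / (1 + q^3))
    (α β : ℝ) (hαβ : α - β = (q + 1) / r)
    (z0 : ℝ) (hz0 : z0 = β + (2*q - 1) / r)
    (g0 : ℝ) (hg0 : g0 = (z0 + α + β) / 3)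
    (G : ℝ → ℝ)
    (hG : G = fun g => g^3 - (z0 + α + β) * g^2
      + (z0 * (α + β) + α * β + 1) * g - (α * β * z0 + (1 - p) * α + p * β)) :
    G g0 = 0 ∧ deriv G g0 = 0 ∧ deriv (deriv G) g0 = 0 := by
  have hdisc : 0 < q ^ 2 - q + 1 := by nlinarith [sq_nonneg (q - 1 / 2)]
  have hr2 : r ^ 2 = q ^ 2 - q + 1 := by rw [hr, Real.sq_sqrt hdisc.le]
  have hr0 : r ≠ 0 := by rw [hr]; positivity
  have hsum := div_add_div_eq_three_mul_div (q := q) hr0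
  have hα : α = β + (q + 1) / r := by linarith
  have hg0' : g0 = β + q / r := by rw [hg0, hz0, hα]; linarith
  have hcubic : G = fun x => (x - g0) ^ 3 := by
    subst hG hz0 hα hp
    rw [hg0']
    exact funext (cubic_eq_cube_sub hsum (div_mul_div_add_one_eq_three_mul_div_sq hr2 hr0)
      (one_sub_inv_mul_div_eq_div_pow_three hr2 hr0 (by positivity)) β)
  exact hcubic ▸ sub_const_pow_vanishes_to_second_order g0 (by norm_num)
end

section
/- Let q > 0, r = sqrt(q^2-q+1), p = 1/(1+q^3), and let α, β, z0, u0 satisfy u0 - α = -1/r, u0 - β = q/r, z0 - u0 = (q-1)/r. Define F(u) = u^2/2 - u z0 + p log(u-α) + (1-p) log(u-β) for u > α. Then F'(u0) = 0, F''(u0) = 0, F'''(u0) = 0, and F''''(u0)/4! = -(q^2-q+1)/(4q). -/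
/-!
Writing `F'(u) = u - z0 - p/(α - u) + (1 - p)/(u - β)` over the common denominator
`(α - u)(u - β)`, the numerator is a cubic with leading coefficient `-1`, and the choice of
`α, β, z0, p` makes it exactly `-(u - u0)^3`. Hence `F' = (u - u0)^3 g` with `g u = -1/((α - u)(u - β))`, and Leibniz's
rule gives `F'(u0) = F''(u0) = F'''(u0) = 0` and `F''''(u0) = 3! g(u0) = -6 r^2/q`.
-/

open Real Topology Nat

theorem iteratedDeriv_pow_sub_mul {𝕜 : Type*} [NontriviallyNormedField 𝕜] {g : 𝕜 → 𝕜}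
    {a : 𝕜} {m n : ℕ} (hg : ContDiffAt 𝕜 n g a) (hn : n ≤ m) :
    iteratedDeriv n (fun x => (x - a) ^ m * g x) a = if n = m then m ! * g a else 0 := by
  have hpow (i : ℕ) :
      iteratedDeriv i (fun x => (x - a) ^ m) a = if i = m then (m ! : 𝕜) else 0 := by
    simp only [iteratedDeriv_comp_sub_const i (· ^ m), sub_self, iteratedDeriv_fun_pow_zero]
    push_cast
    rfl
  rw [iteratedDeriv_fun_mul (by fun_prop) hg]
  simp only [hpow]
  split_ifs with h
  · subst h
    simp
  · refine Finset.sum_eq_zero fun i hi => ?_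
    rw [if_neg (by grind)]
    simp

theorem hasDerivAt_quadratic_add_log {z a b α β u : ℝ} (hα : α - u ≠ 0) (hβ : u - β ≠ 0) :
    HasDerivAt (fun u => u ^ 2 / 2 - u * z + a * log (α - u) + b * log (u - β))
      (u - z - a / (α - u) + b / (u - β)) u := by
  have h := ((((hasDerivAt_pow 2 u).div_const 2).sub ((hasDerivAt_id' u).mul_const z)).add
    ((((hasDerivAt_id' u).const_sub α).log hα).const_mul a)).add
    ((((hasDerivAt_id' u).sub_const β).log hβ).const_mul b)
  refine h.congr_deriv ?_
  ring

theorem quadratic_add_log_deriv_eq_neg_cube_div {q r p u0 α β z0 u : ℝ} (hq : q ≠ -1)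
    (hr : r ^ 2 = q ^ 2 - q + 1) (hp : p = 1 / (1 + q ^ 3))
    (hα : α = u0 + 1 / r) (hβ : β = u0 - q / r) (hz0 : z0 = u0 + (q - 1) / r)
    (hαu : α - u ≠ 0) (hβu : u - β ≠ 0) :
    u - z0 - p / (α - u) + (1 - p) / (u - β) = -(u - u0) ^ 3 / ((α - u) * (u - β)) := by
  have hr0 : r ≠ 0 := by
    rintro rfl
    nlinarith [sq_nonneg (q - 1)]
  have hq3 : 1 + q ^ 3 ≠ 0 := by
    rw [show 1 + q ^ 3 = (1 + q) * r ^ 2 by rw [hr]; ring]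
    exact mul_ne_zero (by contrapose! hq; linarith) (pow_ne_zero 2 hr0)
  rw [eq_div_iff (mul_ne_zero hαu hβu)]
  field_simp
  subst hp hα hβ hz0
  field_simp
  linear_combination ((u0 - u) * r * (1 + q ^ 3) + (q ^ 3 - q)) * hr

theorem F_derivatives_vanish (q : ℝ) (hq : 0 < q)
    (r : ℝ) (hr : r = Real.sqrt (q^2 - q + 1))
    (p : ℝ) (hp : p = 1 / (1 + q^3))
    (u0 : ℝ)
    (α β z0 : ℝ) (hα : α = u0 + 1 / r) (hβ : β = u0 - q / r)
    (hz0 : z0 = u0 + (q - 1) / r)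
    (F : ℝ → ℝ)
    (hF : F = fun u => u^2 / 2 - u * z0 + p * Real.log (α - u)
      + (1 - p) * Real.log (u - β)) :
    deriv F u0 = 0 ∧ iteratedDeriv 2 F u0 = 0 ∧ iteratedDeriv 3 F u0 = 0 ∧
      iteratedDeriv 4 F u0 / (Nat.factorial 4) = -(q^2 - q + 1) / (4 * q) := by
  have hs : 0 < q ^ 2 - q + 1 := by nlinarith [sq_nonneg (q - 1)]
  have hr0 : 0 < r := hr ▸ Real.sqrt_pos.mpr hs
  have hr2 : r ^ 2 = q ^ 2 - q + 1 := hr ▸ Real.sq_sqrt hs.le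
  have hβu0 : β < u0 := by rw [hβ]; exact sub_lt_self u0 (by positivity)
  have hu0α : u0 < α := by rw [hα]; exact lt_add_of_pos_right u0 (by positivity)
  set g : ℝ → ℝ := fun u => -1 / ((α - u) * (u - β))
  have hderiv : deriv F =ᶠ[𝓝 u0] fun u => (u - u0) ^ 3 * g u := by
    filter_upwards [Ioo_mem_nhds hβu0 hu0α] with u ⟨hβu, huα⟩
    have hαu : α - u ≠ 0 := (sub_pos.2 huα).ne'
    have hβu : u - β ≠ 0 := (sub_pos.2 hβu).ne'
    rw [hF, (hasDerivAt_quadratic_add_log hαu hβu).deriv,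
      quadratic_add_log_deriv_eq_neg_cube_div (by linarith) hr2 hp hα hβ hz0 hαu hβu]
    ring
  have hg : ContDiffAt ℝ 3 g u0 :=
    contDiffAt_const.div (by fun_prop) (mul_pos (sub_pos.2 hu0α) (sub_pos.2 hβu0)).ne'
  have hsucc : ∀ n ≤ 3, iteratedDeriv (n + 1) F u0 = if n = 3 then 3 ! * g u0 else 0 :=
    fun n hn => by
      rw [iteratedDeriv_succ', hderiv.iteratedDeriv_eq,
        iteratedDeriv_pow_sub_mul (hg.of_le (by exact_mod_cast hn)) hn]
  refine ⟨by simpa using hsucc 0 (by norm_num), hsucc 1 (by norm_num), hsucc 2 (by norm_num), ?_⟩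
  rw [hsucc 3 le_rfl, if_pos rfl]
  simp only [g, hα, hβ, Nat.factorial, ← hr2]
  field_simp [hq.ne']
  ring
end

section
/- Let q>0, r = sqrt(q^2-q+1), p = 1/(1+q^3), u0 ∈ ℝ, α = u0 + 1/r, β = u0 - q/r, z0 = u0 + (q-1)/r. For the function h(y) := (u0^2 - y^2)/2 - u0 z0 + (p/2) log((u0-α)^2 + y^2) + ((1-p)/2) log((u0-β)^2 + y^2), the derivative satisfies h'(y) = -y^3 (y^2 + q/r^2) / ((y^2 + 1/r^2)(y^2 + q^2/r^2)) for all real y; in particular h'(y) < 0 for y > 0 and h'(y) > 0 for y < 0, so h has a strict global maximum at y = 0. -/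
/-!
Along the vertical line the two logarithmic singularities sit at squared distances
`a = 1/r²` and `b = q²/r²`, and the choice of `r` and `p` makes the weights satisfy
`p b + (1 - p) a = a b` and `a + b - 1 = q/r²`. Under these two relations the numerator of
`h'(y) = -y + p y/(a + y²) + (1 - p) y/(b + y²)` collapses to `-y³ (y² + q/r²)`, so `h'` has
the sign of `-y`, and `h` increases up to `0` and decreases after it.
-/

open Real

theorem hasDerivAt_log_const_add_sq {a : ℝ} (ha : 0 < a) (y : ℝ) :
    HasDerivAt (fun x => log (a + x ^ 2)) (2 * y / (a + y ^ 2)) y :=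
  (((hasDerivAt_pow 2 y).const_add a).log (by positivity)).congr_deriv (by ring)

theorem hasDerivAt_two_log_potential (k l p : ℝ) {a b : ℝ} (ha : 0 < a) (hb : 0 < b) (y : ℝ) :
    HasDerivAt
      (fun x => (k - x ^ 2) / 2 - l + p / 2 * log (a + x ^ 2) + (1 - p) / 2 * log (b + x ^ 2))
      (-y + p * y / (a + y ^ 2) + (1 - p) * y / (b + y ^ 2)) y := by
  have hquad : HasDerivAt (fun x : ℝ => (k - x ^ 2) / 2 - l) (-y) y :=
    ((((hasDerivAt_pow 2 y).const_sub k).div_const 2).sub_const l).congr_deriv (by ring)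
  exact ((hquad.add ((hasDerivAt_log_const_add_sq ha y).const_mul (p / 2))).add
    ((hasDerivAt_log_const_add_sq hb y).const_mul ((1 - p) / 2))).congr_deriv (by ring)

theorem two_log_potential_deriv_eq {a b p : ℝ} (ha : 0 < a) (hb : 0 < b)
    (hab : p * b + (1 - p) * a = a * b) (y : ℝ) :
    -y + p * y / (a + y ^ 2) + (1 - p) * y / (b + y ^ 2) =
      -y ^ 3 * (y ^ 2 + (a + b - 1)) / ((y ^ 2 + a) * (y ^ 2 + b)) := by
  have hya : a + y ^ 2 ≠ 0 := by positivity
  have hyb : b + y ^ 2 ≠ 0 := by positivity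
  rw [add_comm (y ^ 2) a, add_comm (y ^ 2) b]
  field_simp
  linear_combination y * hab

theorem neg_cube_mul_div_neg {a b c y : ℝ} (ha : 0 ≤ a) (hb : 0 ≤ b) (hc : 0 ≤ c)
    (hy : 0 < y) : -y ^ 3 * (y ^ 2 + c) / ((y ^ 2 + a) * (y ^ 2 + b)) < 0 :=
  div_neg_of_neg_of_pos (mul_neg_of_neg_of_pos (neg_neg_of_pos (pow_pos hy 3)) (by positivity))
    (by positivity)

theorem neg_cube_mul_div_pos {a b c y : ℝ} (ha : 0 ≤ a) (hb : 0 ≤ b) (hc : 0 ≤ c)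
    (hy : y < 0) : 0 < -y ^ 3 * (y ^ 2 + c) / ((y ^ 2 + a) * (y ^ 2 + b)) := by
  have hy3 : 0 < (-y) ^ 3 := pow_pos (neg_pos.mpr hy) 3
  have hy0 : y ≠ 0 := hy.ne
  rw [Odd.neg_pow (by decide)] at hy3
  exact div_pos (mul_pos hy3 (by positivity)) (by positivity)

theorem apply_lt_apply_of_deriv_sign {f : ℝ → ℝ} {x₀ : ℝ} (hf : Continuous f)
    (hleft : ∀ y, y < x₀ → 0 < deriv f y) (hright : ∀ y, x₀ < y → deriv f y < 0)
    {y : ℝ} (hy : y ≠ x₀) : f y < f x₀ := by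
  rcases hy.lt_or_gt with hlt | hgt
  · have hmono : StrictMonoOn f (Set.Iic x₀) :=
      strictMonoOn_of_deriv_pos (convex_Iic x₀) hf.continuousOn
        (fun z hz => hleft z (by simpa using hz))
    exact hmono hlt.le (le_refl x₀) hlt
  · have hanti : StrictAntiOn f (Set.Ici x₀) :=
      strictAntiOn_of_deriv_neg (convex_Ici x₀) hf.continuousOn
        (fun z hz => hright z (by simpa using hz))
    exact hanti (le_refl x₀) hgt.le hgt

theorem steepest_descent_u_contour_general (q : ℝ) (hq : 0 < q)
    (r : ℝ) (hr : r = Real.sqrt (q^2 - q + 1))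
    (p : ℝ) (hp : p = 1 / (1 + q^3))
    (u0 : ℝ)
    (α β z0 : ℝ) (hα : α = u0 + 1 / r) (hβ : β = u0 - q / r)
    (h : ℝ → ℝ)
    (hh : h = fun y => (u0^2 - y^2) / 2 - u0 * z0
      + (p / 2) * Real.log ((u0 - α)^2 + y^2)
      + ((1 - p) / 2) * Real.log ((u0 - β)^2 + y^2)) :
    (∀ y : ℝ, deriv h y =
      -y^3 * (y^2 + q / r^2) / ((y^2 + 1 / r^2) * (y^2 + q^2 / r^2))) ∧
    (∀ y : ℝ, 0 < y → deriv h y < 0) ∧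
    (∀ y : ℝ, y < 0 → 0 < deriv h y) ∧
    (∀ y : ℝ, y ≠ 0 → h y < h 0) := by
  have hs : 0 < q ^ 2 - q + 1 := by nlinarith [sq_nonneg (q - 1)]
  have hr2 : r ^ 2 = q ^ 2 - q + 1 := by rw [hr]; exact sq_sqrt hs.le
  have hr0 : r ≠ 0 := by rw [hr]; exact (sqrt_pos.mpr hs).ne'
  have hdα : (u0 - α) ^ 2 = 1 / r ^ 2 := by rw [hα]; field_simp; ring
  have hdβ : (u0 - β) ^ 2 = q ^ 2 / r ^ 2 := by rw [hβ]; field_simp; ring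
  have hweights : p * (q ^ 2 / r ^ 2) + (1 - p) * (1 / r ^ 2) = 1 / r ^ 2 * (q ^ 2 / r ^ 2) := by
    have : 1 + q ^ 3 ≠ 0 := by positivity
    rw [hp]; field_simp; linear_combination q ^ 2 * (1 + q) * hr2
  have hsum : 1 / r ^ 2 + q ^ 2 / r ^ 2 - 1 = q / r ^ 2 := by
    field_simp; linear_combination -hr2
  have hderiv (y : ℝ) : HasDerivAt h
      (-y + p * y / (1 / r ^ 2 + y ^ 2) + (1 - p) * y / (q ^ 2 / r ^ 2 + y ^ 2)) y := by
    rw [hh, hdα, hdβ]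
    exact hasDerivAt_two_log_potential _ _ p (by positivity) (by positivity) y
  have hformula (y : ℝ) : deriv h y =
      -y ^ 3 * (y ^ 2 + q / r ^ 2) / ((y ^ 2 + 1 / r ^ 2) * (y ^ 2 + q ^ 2 / r ^ 2)) := by
    rw [(hderiv y).deriv, two_log_potential_deriv_eq (by positivity) (by positivity) hweights, hsum]
  have hright (y : ℝ) (hy : 0 < y) : deriv h y < 0 := by
    rw [hformula]; exact neg_cube_mul_div_neg (by positivity) (by positivity) (by positivity) hy
  have hleft (y : ℝ) (hy : y < 0) : 0 < deriv h y := by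
    rw [hformula]; exact neg_cube_mul_div_pos (by positivity) (by positivity) (by positivity) hy
  have hcont : Continuous h := continuous_iff_continuousAt.mpr fun y => (hderiv y).continuousAt
  exact ⟨hformula, hright, hleft, fun y hy => apply_lt_apply_of_deriv_sign hcont hleft hright hy⟩

theorem steepest_descent_u_contour (q : ℝ) (hq : 0 < q)
    (r : ℝ) (hr : r = Real.sqrt (q^2 - q + 1))
    (p : ℝ) (hp : p = 1 / (1 + q^3))
    (u0 : ℝ)
    (α β z0 : ℝ) (hα : α = u0 + 1 / r) (hβ : β = u0 - q / r)
    (hz0 : z0 = u0 + (q - 1) / r)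
    (h : ℝ → ℝ)
    (hh : h = fun y => (u0^2 - y^2) / 2 - u0 * z0
      + (p / 2) * Real.log ((u0 - α)^2 + y^2)
      + ((1 - p) / 2) * Real.log ((u0 - β)^2 + y^2)) :
    (∀ y : ℝ, deriv h y =
      -y^3 * (y^2 + q / r^2) / ((y^2 + 1 / r^2) * (y^2 + q^2 / r^2))) ∧
    (∀ y : ℝ, 0 < y → deriv h y < 0) ∧
    (∀ y : ℝ, y < 0 → 0 < deriv h y) ∧
    (∀ y : ℝ, y ≠ 0 → h y < h 0) :=
  steepest_descent_u_contour_general q hq r hr p hp u0 α β z0 hα hβ h hh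
end

section
/- Let q > 0, r = sqrt(q^2-q+1), p = 1/(1+q^3), u0 ∈ ℝ, α = u0 + 1/r, β = u0 - q/r, z0 = u0 + (q-1)/r, and F(u) = u^2/2 - u z0 + p log|u - α| + (1-p) log|u - β|. For any δ > 0 and n ≥ 1 with δ/n^{1/4} ≤ min(1,q)/(2r), one has n·|F(u0 + δ/n^{1/4}) - F(u0) - (F''''(u0)/4!)(δ/n^{1/4})^4| ≤ (64 δ^5)/(5 n^{1/4}) · (q + 1/q)^5. -/
/-!
The parameters are tuned so that `u0` is a degenerate critical point of `F`:
`F'(u0) = F''(u0) = F'''(u0) = 0`, which reduces to `r ^ 2 = q ^ 2 - q + 1` and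
`1 + q ^ 3 = (1 + q) r ^ 2`. Taylor's formula with Lagrange remainder then gives
`F(u0 + h) - F(u0) - F''''(u0) h ^ 4 / 4! = F⁽⁵⁾(ξ) h ^ 5 / 5!` for some `ξ ∈ (u0, u0 + h)`.
For `h ≤ 1 / (2r)` the poles `α`, `β` of `F'` stay at distance at least `1 / (2r)` and `q / r`
from `ξ`, and `F⁽⁵⁾(u) = 24 (p (u - α)⁻⁵ + (1 - p) (u - β)⁻⁵)`, so
`|F⁽⁵⁾(ξ)| ≤ 24 ((2r) ^ 5 + (r / q) ^ 5) ≤ 1536 (q + 1/q) ^ 5`.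
Multiplying by `n = (δ / h) ^ 4` gives the bound.
-/

open Set Real Nat

theorem Real.iteratedDeriv_succ_log (k : ℕ) (x : ℝ) :
    iteratedDeriv (k + 1) log x = (-1) ^ k * k ! * x ^ (-1 - k : ℤ) := by
  rw [iteratedDeriv_succ', deriv_log', iteratedDeriv_eq_iterate, iter_deriv_inv]

theorem Real.iteratedDeriv_succ_log_sub (k : ℕ) (a x : ℝ) :
    iteratedDeriv (k + 1) (fun u => log (u - a)) x =
      (-1) ^ k * k ! * (x - a) ^ (-1 - k : ℤ) := by
  rw [iteratedDeriv_comp_sub_const]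
  exact iteratedDeriv_succ_log k (x - a)

theorem iteratedDeriv_succ_half_sq_sub_mul (k : ℕ) (c x : ℝ) :
    iteratedDeriv (k + 1) (fun u => u ^ 2 / 2 - u * c) x
      = if k = 0 then x - c else if k = 1 then 1 else 0 := by
  have hderiv : deriv (fun u : ℝ => u ^ 2 / 2 - u * c) = fun u => id (u - c) := by
    funext u
    rw [(((hasDerivAt_pow 2 u).div_const 2).fun_sub ((hasDerivAt_id' u).mul_const c)).deriv]
    simp
  rw [iteratedDeriv_succ', hderiv, iteratedDeriv_comp_sub_const]
  beta_reduce
  rw [iteratedDeriv_id]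

theorem taylor_mean_remainder_lagrange_sum_iteratedDeriv {f : ℝ → ℝ} {a b : ℝ} {n : ℕ}
    (hab : a ≠ b) (hf : ∀ x ∈ uIcc a b, ContDiffAt ℝ (n + 1) f x) :
    ∃ ξ ∈ uIoo a b, f b - ∑ k ∈ Finset.range (n + 1), iteratedDeriv k f a / k ! * (b - a) ^ k =
      iteratedDeriv (n + 1) f ξ * (b - a) ^ (n + 1) / (n + 1)! := by
  obtain ⟨ξ, hξ, h⟩ :=
    taylor_mean_remainder_lagrange_iteratedDeriv hab fun x hx => (hf x hx).contDiffWithinAt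
  refine ⟨ξ, hξ, ?_⟩
  rw [← h, taylor_within_apply]
  congr 1
  refine Finset.sum_congr rfl fun k hk => ?_
  have hkn : (k : WithTop ℕ∞) ≤ n + 1 := by exact_mod_cast (Finset.mem_range.1 hk).le
  rw [iteratedDerivWithin_eq_iteratedDeriv (uniqueDiffOn_uIcc hab)
    ((hf a left_mem_uIcc).of_le hkn) left_mem_uIcc, smul_eq_mul]
  ring

theorem taylor_mean_remainder_lagrange_of_iteratedDeriv_eq_zero {f : ℝ → ℝ} {a b : ℝ} {n : ℕ}
    (hn : 1 ≤ n) (hab : a < b) (hf : ∀ x ∈ Icc a b, ContDiffAt ℝ (n + 1) f x)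
    (hvanish : ∀ k, 1 ≤ k → k < n → iteratedDeriv k f a = 0) :
    ∃ ξ ∈ Ioo a b, f b - f a - iteratedDeriv n f a / n ! * (b - a) ^ n =
      iteratedDeriv (n + 1) f ξ * (b - a) ^ (n + 1) / (n + 1)! := by
  obtain ⟨ξ, hξ, h⟩ := taylor_mean_remainder_lagrange_sum_iteratedDeriv hab.ne
    fun x hx => hf x (uIcc_of_le hab.le ▸ hx)
  have hlow : ∑ k ∈ Finset.range n, iteratedDeriv k f a / k ! * (b - a) ^ k = f a := by
    rw [Finset.sum_eq_single 0 (fun k hk hk0 => by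
        rw [hvanish k (by omega) (Finset.mem_range.1 hk), zero_div, zero_mul])
      (fun h0 => absurd (Finset.mem_range.2 hn) h0)]
    simp
  rw [Finset.sum_range_succ, hlow, ← sub_sub] at h
  exact ⟨ξ, uIoo_of_le hab.le ▸ hξ, h⟩

theorem le_add_one_div_of_sq_eq {q r : ℝ} (hq : 0 < q) (hr : 0 ≤ r)
    (hr2 : r ^ 2 = q ^ 2 - q + 1) : r ≤ q + 1 / q ∧ r / q ≤ q + 1 / q := by
  have hK : q + 1 / q = (q ^ 2 + 1) / q := by field_simp
  rw [hK, le_div_iff₀ hq]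
  exact ⟨by nlinarith, by gcongr; nlinarith⟩

/-- `Real.log` is even, so this is the paper's `F` with `log |u - a|`, `log |u - b|`. -/
noncomputable def quadLogPotential (p c a b u : ℝ) : ℝ :=
  u ^ 2 / 2 - u * c + p * log (u - a) + (1 - p) * log (u - b)

section quadLogPotential

variable {p c a b x : ℝ}

theorem contDiffAt_quadLogPotential {n : WithTop ℕ∞} (ha : x ≠ a) (hb : x ≠ b) :
    ContDiffAt ℝ n (quadLogPotential p c a b) x := by
  have hlog {d : ℝ} (hd : x ≠ d) : ContDiffAt ℝ n (fun u => log (u - d)) x :=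
    (contDiffAt_log.2 (sub_ne_zero.2 hd)).comp x (contDiffAt_id.sub contDiffAt_const)
  unfold quadLogPotential
  fun_prop (disch := assumption)

theorem iteratedDeriv_succ_quadLogPotential (k : ℕ) (ha : x ≠ a) (hb : x ≠ b) :
    iteratedDeriv (k + 1) (quadLogPotential p c a b) x =
      (if k = 0 then x - c else if k = 1 then 1 else 0) +
        (-1) ^ k * k ! * (p * (x - a) ^ (-1 - k : ℤ) + (1 - p) * (x - b) ^ (-1 - k : ℤ)) := by
  have hlog {d : ℝ} (hd : x ≠ d) : ContDiffAt ℝ (k + 1) (fun u => log (u - d)) x :=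
    (contDiffAt_log.2 (sub_ne_zero.2 hd)).comp x (contDiffAt_id.sub contDiffAt_const)
  unfold quadLogPotential
  rw [iteratedDeriv_fun_add (by fun_prop (disch := assumption))
      (by fun_prop (disch := assumption)),
    iteratedDeriv_fun_add (by fun_prop) (by fun_prop (disch := assumption)),
    iteratedDeriv_const_mul_field, iteratedDeriv_const_mul_field,
    iteratedDeriv_succ_half_sq_sub_mul, iteratedDeriv_succ_log_sub, iteratedDeriv_succ_log_sub]
  ring

theorem iteratedDeriv_five_quadLogPotential (ha : x ≠ a) (hb : x ≠ b) :
    iteratedDeriv 5 (quadLogPotential p c a b) x =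
      24 * (p * (x - a) ^ (-5 : ℤ) + (1 - p) * (x - b) ^ (-5 : ℤ)) := by
  rw [iteratedDeriv_succ_quadLogPotential 4 ha hb]
  norm_num [Nat.factorial]

theorem abs_iteratedDeriv_five_quadLogPotential_le (hp0 : 0 ≤ p) (hp1 : p ≤ 1) {A B : ℝ}
    (hA : 0 < A) (hB : 0 < B) (ha : A ≤ |x - a|) (hb : B ≤ |x - b|) :
    |iteratedDeriv 5 (quadLogPotential p c a b) x| ≤ 24 * (A⁻¹ ^ 5 + B⁻¹ ^ 5) := by
  have hxa : 0 < |x - a| := hA.trans_le ha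
  have hxb : 0 < |x - b| := hB.trans_le hb
  rw [iteratedDeriv_five_quadLogPotential (sub_ne_zero.1 (abs_pos.1 hxa))
    (sub_ne_zero.1 (abs_pos.1 hxb)), abs_mul, abs_of_pos (by norm_num : (0 : ℝ) < 24)]
  have hpow (y C : ℝ) (hC : 0 < C) (hy : C ≤ |y|) : |y ^ (-5 : ℤ)| ≤ C⁻¹ ^ 5 := by
    rw [zpow_neg, abs_inv, zpow_ofNat, abs_pow, ← inv_pow]
    gcongr
  gcongr
  calc |p * (x - a) ^ (-5 : ℤ) + (1 - p) * (x - b) ^ (-5 : ℤ)|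
      ≤ p * |(x - a) ^ (-5 : ℤ)| + (1 - p) * |(x - b) ^ (-5 : ℤ)| := by
        refine (abs_add_le _ _).trans ?_
        rw [abs_mul, abs_mul, abs_of_nonneg hp0, abs_of_nonneg (sub_nonneg.2 hp1)]
    _ ≤ 1 * A⁻¹ ^ 5 + 1 * B⁻¹ ^ 5 :=
        add_le_add (mul_le_mul hp1 (hpow _ _ hA ha) (abs_nonneg _) zero_le_one)
          (mul_le_mul (by linarith) (hpow _ _ hB hb) (abs_nonneg _) zero_le_one)
    _ = A⁻¹ ^ 5 + B⁻¹ ^ 5 := by ring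

end quadLogPotential

section criticalPoint

variable {q r u : ℝ}

theorem iteratedDeriv_quadLogPotential_eq_zero (hq : 0 < q) (hr : 0 < r)
    (hr2 : r ^ 2 = q ^ 2 - q + 1) {k : ℕ} (hk1 : 1 ≤ k) (hk4 : k < 4) :
    iteratedDeriv k
      (quadLogPotential (1 / (1 + q ^ 3)) (u + (q - 1) / r) (u + 1 / r) (u - q / r)) u = 0 := by
  obtain ⟨j, rfl⟩ : ∃ j, k = j + 1 := ⟨k - 1, by omega⟩
  have hua : u - (u + 1 / r) = -(1 / r) := by ring
  have hub : u - (u - q / r) = q / r := by ring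
  have hq3 : 1 + q ^ 3 = (1 + q) * r ^ 2 := by rw [hr2]; ring
  rw [iteratedDeriv_succ_quadLogPotential j (lt_add_of_pos_right u (one_div_pos.2 hr)).ne
    (sub_lt_self u (div_pos hq hr)).ne', hua, hub, hq3]
  have hj : j ≤ 2 := by omega
  interval_cases j
  all_goals
    norm_num
    field_simp
    rw [hr2]
    ring

theorem le_abs_sub_poles_of_mem_Icc (hr : 0 < r) {h x : ℝ}
    (hh : h ≤ 1 / (2 * r)) (hx : x ∈ Icc u (u + h)) :
    1 / (2 * r) ≤ |x - (u + 1 / r)| ∧ q / r ≤ |x - (u - q / r)| := by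
  have hr1 : 1 / r = 2 * (1 / (2 * r)) := by field_simp
  constructor
  · calc 1 / (2 * r) ≤ u + 1 / r - x := by linarith [hx.2]
      _ ≤ |x - (u + 1 / r)| := abs_sub_comm x _ ▸ le_abs_self _
  · calc q / r ≤ x - (u - q / r) := by linarith [hx.1]
      _ ≤ |x - (u - q / r)| := le_abs_self _

theorem contDiffAt_quadLogPotential_of_mem_Icc (hq : 0 < q) (hr : 0 < r) {p c h x : ℝ}
    {n : WithTop ℕ∞} (hh : h ≤ 1 / (2 * r)) (hx : x ∈ Icc u (u + h)) :
    ContDiffAt ℝ n (quadLogPotential p c (u + 1 / r) (u - q / r)) x := by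
  obtain ⟨hxa, hxb⟩ := le_abs_sub_poles_of_mem_Icc hr hh hx
  exact contDiffAt_quadLogPotential
    (sub_ne_zero.1 (abs_pos.1 (lt_of_lt_of_le (by positivity) hxa)))
    (sub_ne_zero.1 (abs_pos.1 (lt_of_lt_of_le (by positivity) hxb)))

theorem abs_iteratedDeriv_five_quadLogPotential_le_of_mem_Icc (hq : 0 < q) (hr : 0 < r)
    (hr2 : r ^ 2 = q ^ 2 - q + 1) {c h x : ℝ} (hh : h ≤ 1 / (2 * r)) (hx : x ∈ Icc u (u + h)) :
    |iteratedDeriv 5 (quadLogPotential (1 / (1 + q ^ 3)) c (u + 1 / r) (u - q / r)) x|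
      ≤ 1536 * (q + 1 / q) ^ 5 := by
  obtain ⟨hxa, hxb⟩ := le_abs_sub_poles_of_mem_Icc hr hh hx
  obtain ⟨hrK, hrqK⟩ := le_add_one_div_of_sq_eq hq hr.le hr2
  have hp1 : 1 / (1 + q ^ 3) ≤ 1 :=
    (div_le_one (by positivity)).2 (le_add_of_nonneg_right (by positivity))
  have hK : 0 ≤ q + 1 / q := by positivity
  calc _ ≤ 24 * ((1 / (2 * r))⁻¹ ^ 5 + (q / r)⁻¹ ^ 5) :=
        abs_iteratedDeriv_five_quadLogPotential_le (by positivity) hp1 (by positivity)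
          (by positivity) hxa hxb
    _ = 24 * ((2 * r) ^ 5 + (r / q) ^ 5) := by rw [one_div, inv_inv, inv_div]
    _ ≤ 24 * ((2 * (q + 1 / q)) ^ 5 + (q + 1 / q) ^ 5) := by gcongr
    _ ≤ 1536 * (q + 1 / q) ^ 5 := by nlinarith [pow_nonneg hK 5]

end criticalPoint

theorem taylor_estimate (q : ℝ) (hq : 0 < q)
    (r : ℝ) (hr : r = Real.sqrt (q^2 - q + 1))
    (p : ℝ) (hp : p = 1 / (1 + q^3))
    (u0 : ℝ)
    (α β z0 : ℝ) (hα : α = u0 + 1 / r) (hβ : β = u0 - q / r)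
    (hz0 : z0 = u0 + (q - 1) / r)
    (F : ℝ → ℝ)
    (hF : F = fun u => u^2 / 2 - u * z0 + p * Real.log |u - α|
      + (1 - p) * Real.log |u - β|)
    (δ n : ℝ) (hδ : 0 < δ) (hn : 1 ≤ n)
    (hsmall : δ / n ^ ((1:ℝ)/4) ≤ min 1 q / (2 * r)) :
    n * |F (u0 + δ / n ^ ((1:ℝ)/4)) - F u0
        - (iteratedDeriv 4 F u0 / (Nat.factorial 4)) * (δ / n ^ ((1:ℝ)/4))^4|
      ≤ 64 * δ^5 / (5 * n ^ ((1:ℝ)/4)) * (q + 1/q)^5 := by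
  have hn0 : 0 < n := one_pos.trans_le hn
  set t := n ^ ((1:ℝ)/4) with ht
  have ht4 : t ^ 4 = n := by rw [ht, ← rpow_natCast, ← rpow_mul hn0.le]; norm_num
  set h := δ / t with hh
  have hh0 : 0 < h := div_pos hδ (rpow_pos_of_pos hn0 _)
  have hr0 : 0 < r := hr ▸ sqrt_pos.2 (by nlinarith)
  have hr2 : r ^ 2 = q ^ 2 - q + 1 := hr ▸ sq_sqrt (by nlinarith)
  have hh1 : h ≤ 1 / (2 * r) := hsmall.trans (by gcongr; exact min_le_left _ _)
  have hFG : F = quadLogPotential p z0 α β := by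
    funext u; simp [hF, quadLogPotential, log_abs]
  subst hp hα hβ hz0
  obtain ⟨ξ, hξ, hTaylor⟩ := taylor_mean_remainder_lagrange_of_iteratedDeriv_eq_zero (n := 4)
    (by norm_num) (lt_add_of_pos_right u0 hh0)
    (fun x hx => hFG ▸ contDiffAt_quadLogPotential_of_mem_Icc hq hr0 hh1 hx)
    (fun k hk1 hk4 => hFG ▸ iteratedDeriv_quadLogPotential_eq_zero hq hr0 hr2 hk1 hk4)
  have hbound : |iteratedDeriv 5 F ξ| ≤ 1536 * (q + 1 / q) ^ 5 :=
    hFG ▸ abs_iteratedDeriv_five_quadLogPotential_le_of_mem_Icc hq hr0 hr2 hh1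
      (Ioo_subset_Icc_self hξ)
  simp only [Nat.reduceAdd, add_sub_cancel_left] at hTaylor
  rw [hTaylor, abs_div, abs_mul, abs_of_pos (pow_pos hh0 5), Nat.abs_cast]
  calc n * (|iteratedDeriv 5 F ξ| * h ^ 5 / (5 ! : ℝ))
      ≤ n * (1536 * (q + 1 / q) ^ 5 * h ^ 5 / 5 !) := by gcongr
    _ = 64 * δ ^ 5 / (5 * t) * (q + 1 / q) ^ 5 := by
        rw [hh, ← ht4]; norm_num [Nat.factorial]; field_simp; ring
end
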